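/- arXiv:math/0110108 — 6 statements merged into one kernel-verified Lean document; each statement's English description precedes it below -/
import Mathlib

section
/- Let n ≥ 1 and let g : ℝ^n → ℝ be monotone and additively homogeneous. If p ∈ ℝ^n is such that the set {p·x − g(x) : x ∈ ℝ^n} is bounded above (i.e. p lies in the domain of the Fenchel transform g*(p) = sup_x (p·x − g(x))), then p is a stochastic vector: p_i ≥ 0 for all i and ∑_i p_i = 1. -/
open Matrix Filter

/-- `f` is additively homogeneous: `f (c·1 + x) = c·1 + f x`. -/
def AddHomog {n : ℕ} (f : (Fin n → ℝ) → (Fin n → ℝ)) : Prop :=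
  ∀ (c : ℝ) (x : Fin n → ℝ), f (fun i => c + x i) = fun i => c + f x i

/-- A map between coordinate spaces is convex if each coordinate function is convex. -/
def IsConvexMap {n m : ℕ} (f : (Fin n → ℝ) → (Fin m → ℝ)) : Prop :=
  ∀ i, ConvexOn ℝ Set.univ (fun x => f x i)

/-- Subdifferential of a convex map `f : ℝ^n → ℝ^m` at `v`: matrices `P` with
`f x - f v ≥ P (x - v)` componentwise. -/
def Subdiff {n m : ℕ} (f : (Fin n → ℝ) → (Fin m → ℝ)) (v : Fin n → ℝ) :
    Set (Matrix (Fin m) (Fin n) ℝ) :=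
  {P | ∀ x i, P.mulVec (x - v) i ≤ f x i - f v i}

/-- `p` is a stochastic vector. -/
def IsStochVec {n : ℕ} (p : Fin n → ℝ) : Prop := (∀ i, 0 ≤ p i) ∧ ∑ i, p i = 1

/-- `P` is a row-stochastic matrix. -/
def IsStochMat {n : ℕ} (P : Matrix (Fin n) (Fin n) ℝ) : Prop := ∀ i, IsStochVec (P i)

/-- `i` has access to `j` in the graph of the nonnegative matrix `P`
(arcs `i → j` when `P i j ≠ 0`). -/
def MatAccess {n : ℕ} (P : Matrix (Fin n) (Fin n) ℝ) : Fin n → Fin n → Prop :=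
  Relation.ReflTransGen (fun i j => P i j ≠ 0)

/-- `C` is a class of `P`: an equivalence class of mutual access. -/
def IsClass {n : ℕ} (P : Matrix (Fin n) (Fin n) ℝ) (C : Set (Fin n)) : Prop :=
  ∃ i, C = {j | MatAccess P i j ∧ MatAccess P j i}

/-- `C` is a final class of `P`: a class with no access out of itself. -/
def IsFinalClass {n : ℕ} (P : Matrix (Fin n) (Fin n) ℝ) (C : Set (Fin n)) : Prop :=
  IsClass P C ∧ ∀ i ∈ C, ∀ j, MatAccess P i j → j ∈ C

/-- `N^f(P)`: the union of the final classes of `P`. -/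
def finalNodes {n : ℕ} (P : Matrix (Fin n) (Fin n) ℝ) : Set (Fin n) :=
  {i | ∃ C, IsFinalClass P C ∧ i ∈ C}

/-- Final graph `G^f(P)`: union of graphs of `P_{FF}` over final classes `F`. -/
def finalGraph {n : ℕ} (P : Matrix (Fin n) (Fin n) ℝ) : Fin n → Fin n → Prop :=
  fun i j => ∃ C, IsFinalClass P C ∧ i ∈ C ∧ j ∈ C ∧ P i j ≠ 0

/-- `N^f(PP)` for a set of matrices. -/
def finalNodesSet {n : ℕ} (PP : Set (Matrix (Fin n) (Fin n) ℝ)) : Set (Fin n) :=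
  {i | ∃ P ∈ PP, i ∈ finalNodes P}

/-- `𝒞^f(PP)`: final classes of matrices in `PP`. -/
def finalClassesSet {n : ℕ} (PP : Set (Matrix (Fin n) (Fin n) ℝ)) : Set (Set (Fin n)) :=
  {C | ∃ P ∈ PP, IsFinalClass P C}

/-- `𝒢^f(PP)`: union of final graphs of matrices in `PP`. -/
def finalGraphSet {n : ℕ} (PP : Set (Matrix (Fin n) (Fin n) ℝ)) : Fin n → Fin n → Prop :=
  fun i j => ∃ P ∈ PP, finalGraph P i j

/-- Access in a directed graph given as a relation. -/
def GAccess {n : ℕ} (G : Fin n → Fin n → Prop) : Fin n → Fin n → Prop :=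
  Relation.ReflTransGen G

/-- `C` is a (nontrivial) class of the graph `G`: an equivalence class of mutual
access containing at least one arc (i.e. the node set of a strongly connected component
of the graph `G`). -/
def IsGraphClass {n : ℕ} (G : Fin n → Fin n → Prop) (C : Set (Fin n)) : Prop :=
  (∃ i, C = {j | GAccess G i j ∧ GAccess G j i}) ∧ ∃ i ∈ C, ∃ j ∈ C, G i j

/-- `G^k`: arcs are directed paths of length `k` in `G`. -/
def GraphPow {n : ℕ} (G : Fin n → Fin n → Prop) (k : ℕ) : Fin n → Fin n → Prop :=
  fun i j => ∃ c : ℕ → Fin n, c 0 = i ∧ c k = j ∧ ∀ t < k, G (c t) (c (t + 1))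

/-- There is a circuit of length `ℓ ≥ 1` of `G` with all nodes in `C`. -/
def HasCircuitIn {n : ℕ} (G : Fin n → Fin n → Prop) (C : Set (Fin n)) (ℓ : ℕ) : Prop :=
  0 < ℓ ∧ ∃ c : ℕ → Fin n, c 0 = c ℓ ∧ (∀ t ≤ ℓ, c t ∈ C) ∧ ∀ t < ℓ, G (c t) (c (t + 1))

/-- gcd of a set of natural numbers. -/
noncomputable def SetGcd (S : Set ℕ) : ℕ :=
  sInf {d | (∀ s ∈ S, d ∣ s) ∧ ∀ e, (∀ s ∈ S, e ∣ s) → e ∣ d}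

/-- lcm of a set of natural numbers. -/
noncomputable def SetLcm (S : Set ℕ) : ℕ :=
  sInf {m | (∀ s ∈ S, s ∣ m) ∧ ∀ e, (∀ s ∈ S, s ∣ e) → m ∣ e}

/-- Cyclicity of a graph: lcm over the strongly connected components of the
gcd of the lengths of their circuits. -/
noncomputable def GraphCyclicity {n : ℕ} (G : Fin n → Fin n → Prop) : ℕ :=
  SetLcm {d | ∃ C, IsGraphClass G C ∧ d = SetGcd {ℓ | HasCircuitIn G C ℓ}}

/-- The (additive) eigenspace of `f` for eigenvalue `lam`. -/
def Eigenspace {n : ℕ} (f : (Fin n → ℝ) → (Fin n → ℝ)) (lam : ℝ) : Set (Fin n → ℝ) :=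
  {x | f x = fun i => lam + x i}

/-- Restriction of a vector to the coordinates in `C`. -/
def restrictTo {n : ℕ} (C : Set (Fin n)) (x : Fin n → ℝ) : C → ℝ := fun i => x i

/-! Along the constants `c • 1` the function `x ↦ p ⬝ᵥ x - g x` equals `c * (∑ p - 1) - g 0`,
and along `-t • eᵢ` (with `t ≥ 0`) monotonicity bounds it below by `t * (-p i) - g 0`;
a bounded-above affine function of `t` must have slope `0`, resp. `≤ 0`. -/

lemma nonpos_of_forall_nonneg_mul_le {a M : ℝ} (h : ∀ t, 0 ≤ t → t * a ≤ M) : a ≤ 0 := by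
  by_contra! ha
  have := h ((|M| + 1) / a) (by positivity)
  rw [div_mul_cancel₀ _ ha.ne'] at this
  linarith [le_abs_self M]

lemma eq_zero_of_forall_mul_le {a M : ℝ} (h : ∀ t, t * a ≤ M) : a = 0 := by
  have hle : a ≤ 0 := nonpos_of_forall_nonneg_mul_le fun t _ => h t
  have hge : -a ≤ 0 := nonpos_of_forall_nonneg_mul_le fun t _ => by
    simpa using h (-t)
  linarith

section FenchelDomain

variable {ι : Type*} [Fintype ι] {g : (ι → ℝ) → ℝ} {p : ι → ℝ}

lemma sum_eq_one_of_bddAbove_dotProduct_sub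
    (hhom : ∀ (c : ℝ) (x : ι → ℝ), g (fun i => c + x i) = c + g x)
    (hdom : BddAbove (Set.range fun x => p ⬝ᵥ x - g x)) : ∑ i, p i = 1 := by
  obtain ⟨M, hM⟩ := hdom
  have hconst : ∀ c : ℝ, g (fun _ => c) = c + g 0 := fun c => by simpa using hhom c 0
  have hslope : ∀ c : ℝ, c * (∑ i, p i - 1) ≤ M + g 0 := fun c => by
    have hc := hM (Set.mem_range_self fun _ => c)
    simp only [dotProduct, hconst, ← Finset.sum_mul] at hc
    linarith
  linarith [eq_zero_of_forall_mul_le hslope]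

lemma nonneg_of_bddAbove_dotProduct_sub (hmon : Monotone g)
    (hdom : BddAbove (Set.range fun x => p ⬝ᵥ x - g x)) (i : ι) : 0 ≤ p i := by
  classical
  obtain ⟨M, hM⟩ := hdom
  have hslope : ∀ t : ℝ, 0 ≤ t → t * (-p i) ≤ M + g 0 := fun t ht => by
    have hx := hM (Set.mem_range_self (Pi.single i (-t)))
    have hg : g (Pi.single i (-t)) ≤ g 0 := hmon (Pi.single_nonpos.mpr (by linarith))
    rw [dotProduct_single] at hx
    linarith
  linarith [nonpos_of_forall_nonneg_mul_le hslope]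

end FenchelDomain

theorem stmt0_general (n : ℕ) (g : (Fin n → ℝ) → ℝ)
    (hmon : Monotone g)
    (hhom : ∀ (c : ℝ) (x : Fin n → ℝ), g (fun i => c + x i) = c + g x)
    (p : Fin n → ℝ)
    (hdom : BddAbove (Set.range fun x : Fin n → ℝ => (∑ i, p i * x i) - g x)) :
    (∀ i, 0 ≤ p i) ∧ ∑ i, p i = 1 :=
  ⟨nonneg_of_bddAbove_dotProduct_sub hmon hdom, sum_eq_one_of_bddAbove_dotProduct_sub hhom hdom⟩

/-- the domain of the Fenchel transform of a monotone additively
homogeneous map consists of stochastic vectors. -/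
theorem stmt0 (n : ℕ) (hn : 1 ≤ n) (g : (Fin n → ℝ) → ℝ)
    (hmon : Monotone g)
    (hhom : ∀ (c : ℝ) (x : Fin n → ℝ), g (fun i => c + x i) = c + g x)
    (p : Fin n → ℝ)
    (hdom : BddAbove (Set.range fun x : Fin n → ℝ => (∑ i, p i * x i) - g x)) :
    (∀ i, 0 ≤ p i) ∧ ∑ i, p i = 1 :=
  stmt0_general n g hmon hhom p hdom
end

section
/- Let n ≥ 1 and let g : ℝ^n → ℝ be monotone, additively homogeneous, and convex. Then for every v ∈ ℝ^n the subdifferential ∂g(v) = {p ∈ ℝ^n : g(x) − g(v) ≥ p·(x − v) for all x ∈ ℝ^n} is a nonempty, compact, convex set, and every p ∈ ∂g(v) is a stochastic vector. -/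
open Matrix Filter

/-!
Testing the subgradient inequality at `v - eᵢ` and using monotonicity gives `pᵢ ≥ 0`; testing
it at `v ± 1` and using additive homogeneity gives `∑ pᵢ = 1`. Hence the subdifferential lies in
the standard simplex, and being an intersection of closed half-spaces it is compact and convex.
It is nonempty because a convex function on `ℝⁿ` is continuous, so its strict epigraph is an
open convex set which Hahn–Banach separates from `(v, g v)`; the separating functional is not
vertical and, normalised, is a subgradient.
-/

def subdiff {ι : Type*} [Fintype ι] (g : (ι → ℝ) → ℝ) (v : ι → ℝ) : Set (ι → ℝ) :=
  {p | ∀ x, ∑ i, p i * (x i - v i) ≤ g x - g v}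

theorem ConvexOn.exists_subgradient {E : Type*} [AddCommGroup E] [TopologicalSpace E]
    [IsTopologicalAddGroup E] [Module ℝ E] [ContinuousSMul ℝ E] [LocallyConvexSpace ℝ E]
    {g : E → ℝ} (hconv : ConvexOn ℝ Set.univ g) (hcont : Continuous g) (v : E) :
    ∃ ℓ : StrongDual ℝ E, ∀ x, ℓ (x - v) ≤ g x - g v := by
  have hopen : IsOpen {q : E × ℝ | q.1 ∈ Set.univ ∧ g q.1 < q.2} := by
    simpa using isOpen_lt (hcont.comp continuous_fst) continuous_snd
  obtain ⟨f, hf⟩ := geometric_hahn_banach_open_point hconv.convex_strict_epigraph hopen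
    (x := (v, g v)) (by simp)
  set c := f (0, 1)
  have hf_apply (x : E) (t : ℝ) : f (x, t) = f (x, 0) + t * c := by
    rw [← smul_eq_mul, ← map_smul, ← map_add]
    simp
  have hc : c < 0 := by
    have := hf (v, g v + 1) (by simp)
    rw [hf_apply v, hf_apply v (g v)] at this
    linarith
  refine ⟨(-c)⁻¹ • f.comp (ContinuousLinearMap.inl ℝ E ℝ), fun x => ?_⟩
  refine le_of_forall_gt_imp_ge_of_dense fun t ht => ?_
  have hsep := hf (x, t + g v) ⟨trivial, by linarith⟩
  rw [hf_apply x, hf_apply v (g v)] at hsep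
  have hℓ : (-c)⁻¹ * (f (x, 0) - f (v, 0)) < t := by
    rw [inv_mul_lt_iff₀ (by linarith)]
    linarith
  have hxv : f (x - v, 0) = f (x, 0) - f (v, 0) := by
    rw [← map_sub, Prod.mk_sub_mk, sub_zero]
  simpa [hxv] using hℓ.le

section Subdiff

variable {ι : Type*} [Fintype ι] {g : (ι → ℝ) → ℝ} {v p : ι → ℝ}

theorem convex_subdiff (g : (ι → ℝ) → ℝ) (v : ι → ℝ) : Convex ℝ (subdiff g v) := by
  simp only [subdiff, Set.ofPred_forall]
  refine convex_iInter fun x => convex_halfSpace_le ⟨fun p q => ?_, fun a p => ?_⟩ _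
  · simp only [Pi.add_apply, add_mul, Finset.sum_add_distrib]
  · simp only [Pi.smul_apply, smul_eq_mul, mul_assoc, Finset.mul_sum]

theorem isClosed_subdiff (g : (ι → ℝ) → ℝ) (v : ι → ℝ) : IsClosed (subdiff g v) := by
  simp only [subdiff, Set.ofPred_forall]
  exact isClosed_iInter fun x => isClosed_le (by fun_prop) continuous_const

theorem nonneg_of_mem_subdiff (hmon : Monotone g) (hp : p ∈ subdiff g v) (i : ι) : 0 ≤ p i := by
  classical
  have hsub := hp (v - Pi.single i 1)
  have hle : g (v - Pi.single i 1) ≤ g v :=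
    hmon (sub_le_self v (Pi.single_nonneg.mpr zero_le_one))
  simp only [Pi.sub_apply, sub_sub_cancel_left, mul_neg, Finset.sum_neg_distrib,
    Pi.single_apply, mul_ite, mul_one, mul_zero, Finset.sum_ite_eq', Finset.mem_univ,
    if_true] at hsub
  linarith

theorem sum_eq_one_of_mem_subdiff (hhom : ∀ (c : ℝ) (x : ι → ℝ), g (fun i => c + x i) = c + g x)
    (hp : p ∈ subdiff g v) : ∑ i, p i = 1 := by
  have htrans (c : ℝ) : (∑ i, p i) * c ≤ c := by
    simpa [hhom, Finset.sum_mul] using hp (fun i => c + v i)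
  linarith [htrans 1, htrans (-1)]

theorem subdiff_subset_stdSimplex (hmon : Monotone g)
    (hhom : ∀ (c : ℝ) (x : ι → ℝ), g (fun i => c + x i) = c + g x) (v : ι → ℝ) :
    subdiff g v ⊆ stdSimplex ℝ ι :=
  fun _ hp => ⟨nonneg_of_mem_subdiff hmon hp, sum_eq_one_of_mem_subdiff hhom hp⟩

theorem isCompact_subdiff (hmon : Monotone g)
    (hhom : ∀ (c : ℝ) (x : ι → ℝ), g (fun i => c + x i) = c + g x) (v : ι → ℝ) :
    IsCompact (subdiff g v) :=
  (isCompact_stdSimplex ℝ ι).of_isClosed_subset (isClosed_subdiff g v)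
    (subdiff_subset_stdSimplex hmon hhom v)

theorem ConvexOn.subdiff_nonempty (hconv : ConvexOn ℝ Set.univ g) (v : ι → ℝ) :
    (subdiff g v).Nonempty := by
  classical
  obtain ⟨ℓ, hℓ⟩ := hconv.exists_subgradient
    (continuousOn_univ.mp (hconv.continuousOn isOpen_univ)) v
  refine ⟨fun i => ℓ fun j => if i = j then 1 else 0, fun x => ?_⟩
  have hexpand := ℓ.toLinearMap.pi_apply_eq_sum_univ (x - v)
  simp only [ContinuousLinearMap.coe_coe, smul_eq_mul, Pi.sub_apply] at hexpand
  simpa only [hexpand, mul_comm] using hℓ x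

end Subdiff

theorem stmt1_general (n : ℕ) (g : (Fin n → ℝ) → ℝ)
    (hmon : Monotone g)
    (hhom : ∀ (c : ℝ) (x : Fin n → ℝ), g (fun i => c + x i) = c + g x)
    (hconv : ConvexOn ℝ Set.univ g) (v : Fin n → ℝ) :
    {p : Fin n → ℝ | ∀ x, ∑ i, p i * (x i - v i) ≤ g x - g v}.Nonempty ∧
    IsCompact {p : Fin n → ℝ | ∀ x, ∑ i, p i * (x i - v i) ≤ g x - g v} ∧
    Convex ℝ {p : Fin n → ℝ | ∀ x, ∑ i, p i * (x i - v i) ≤ g x - g v} ∧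
    ∀ p ∈ {p : Fin n → ℝ | ∀ x, ∑ i, p i * (x i - v i) ≤ g x - g v},
      (∀ i, 0 ≤ p i) ∧ ∑ i, p i = 1 :=
  ⟨hconv.subdiff_nonempty v, isCompact_subdiff hmon hhom v, convex_subdiff g v,
    fun _ hp => subdiff_subset_stdSimplex hmon hhom v hp⟩

/-- the subdifferential of a convex monotone additively homogeneous
scalar map is a nonempty compact convex set of stochastic vectors. -/
theorem stmt1 (n : ℕ) (hn : 1 ≤ n) (g : (Fin n → ℝ) → ℝ)
    (hmon : Monotone g)
    (hhom : ∀ (c : ℝ) (x : Fin n → ℝ), g (fun i => c + x i) = c + g x)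
    (hconv : ConvexOn ℝ Set.univ g) (v : Fin n → ℝ) :
    {p : Fin n → ℝ | ∀ x, ∑ i, p i * (x i - v i) ≤ g x - g v}.Nonempty ∧
    IsCompact {p : Fin n → ℝ | ∀ x, ∑ i, p i * (x i - v i) ≤ g x - g v} ∧
    Convex ℝ {p : Fin n → ℝ | ∀ x, ∑ i, p i * (x i - v i) ≤ g x - g v} ∧
    ∀ p ∈ {p : Fin n → ℝ | ∀ x, ∑ i, p i * (x i - v i) ≤ g x - g v},
      (∀ i, 0 ≤ p i) ∧ ∑ i, p i = 1 :=
  stmt1_general n g hmon hhom hconv v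
end

section
/- Let f : ℝ^n → ℝ^n be convex, monotone, and additively homogeneous, and let v and v' be two eigenvectors of f. Then N^f(∂f(v)) = N^f(∂f(v')), 𝒞^f(∂f(v)) = 𝒞^f(∂f(v')), and 𝒢^f(∂f(v)) = 𝒢^f(∂f(v')); that is, the critical nodes, critical class collection, and critical graph of f do not depend on the choice of eigenvector. -/
/-!
Every `P ∈ ∂f(v)` is row-stochastic: monotonicity gives `P ≥ 0` and additive homogeneity
gives `P 1 = 1`. Hence `P` has a nonnegative invariant row vector `m`, which can be taken
positive on any prescribed final class `C` of `P`. Pairing the subgradient inequality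
`f v' - f v ≥ P (v' - v)` with `m` leaves `(λ' - λ) ∑ mᵢ ≥ 0`, so by symmetry `λ = λ'`; the
pairing then vanishes, so the inequality is an equality on `C`, i.e. the rows of `P` indexed
by `C` are subgradients at `v'` too. Completing them by subgradients at `v'` (Hahn–Banach)
gives `Q ∈ ∂f(v')` with the same rows on `C`, and then `C` is a final class of `Q`.
-/

open Matrix Filter

theorem ConvexOn.exists_subgradient_s3 {E : Type*} [NormedAddCommGroup E] [NormedSpace ℝ E]
    [FiniteDimensional ℝ E] {g : E → ℝ} (hg : ConvexOn ℝ Set.univ g) (v : E) :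
    ∃ φ : E →L[ℝ] ℝ, ∀ x, φ (x - v) ≤ g x - g v := by
  have hopen : IsOpen {p : E × ℝ | p.1 ∈ Set.univ ∧ g p.1 < p.2} := by
    simpa using isOpen_lt (hg.locallyLipschitz.continuous.comp continuous_fst) continuous_snd
  obtain ⟨Φ, hΦ⟩ := geometric_hahn_banach_open_point hg.convex_strict_epigraph hopen
    (x := (v, g v)) (by simp)
  have hsplit : ∀ x t, Φ (x, t) = Φ (x, 0) + t * Φ (0, 1) := fun x t => by
    rw [show (x, t) = (x, 0) + t • ((0 : E), (1 : ℝ)) by ext <;> simp, map_add, map_smul,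
      smul_eq_mul]
  have hα : 0 < -Φ (0, 1) := by
    have := hΦ (v, g v + 1) (by simp)
    rw [hsplit v (g v + 1), hsplit v (g v)] at this
    linarith
  refine ⟨(-Φ (0, 1))⁻¹ • Φ.comp (ContinuousLinearMap.inl ℝ E ℝ), fun x => ?_⟩
  have hx : ∀ ε > 0, Φ (x, 0) - Φ (v, 0) < -Φ (0, 1) * (g x - g v + ε) := fun ε hε => by
    have := hΦ (x, g x + ε) (by simpa using hε)
    rw [hsplit x, hsplit v (g v)] at this
    linarith
  have hle : Φ (x, 0) - Φ (v, 0) ≤ -Φ (0, 1) * (g x - g v) := by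
    refine le_of_forall_pos_lt_add fun ε hε => ?_
    have := hx (ε / -Φ (0, 1)) (div_pos hε hα)
    rwa [mul_add, mul_div_cancel₀ _ hα.ne'] at this
  simp only [_root_.smul_apply, ContinuousLinearMap.comp_apply,
    ContinuousLinearMap.inl_apply, smul_eq_mul]
  rw [show ((x - v, 0) : E × ℝ) = (x, 0) - (v, 0) by simp, map_sub, inv_mul_le_iff₀ hα]
  exact hle

section Subdifferential

variable {m n : ℕ}

lemma exists_mem_subdiff_of_rows {f : (Fin n → ℝ) → (Fin m → ℝ)} (hconv : IsConvexMap f)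
    {v : Fin n → ℝ} {P : Matrix (Fin m) (Fin n) ℝ} {C : Set (Fin m)}
    (hP : ∀ i ∈ C, ∀ x, (P *ᵥ (x - v)) i ≤ f x i - f v i) :
    ∃ Q ∈ Subdiff f v, ∀ i ∈ C, Q i = P i := by
  classical
  choose φ hφ using fun i => (hconv i).exists_subgradient_s3 v
  let R := LinearMap.toMatrix' (LinearMap.pi fun i => (φ i : (Fin n → ℝ) →ₗ[ℝ] ℝ))
  refine ⟨fun i => if i ∈ C then P i else R i, fun x i => ?_, fun i hi => if_pos hi⟩
  by_cases hi : i ∈ C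
  · simpa [mulVec, hi] using hP i hi x
  · have hR : (R *ᵥ (x - v)) i = φ i (x - v) := by
      simp [R, LinearMap.toMatrix'_mulVec]
    simpa [mulVec, hi, ← hR] using hφ i x

lemma subdiff_nonempty {f : (Fin n → ℝ) → (Fin m → ℝ)} (hconv : IsConvexMap f)
    (v : Fin n → ℝ) : (Subdiff f v).Nonempty :=
  (exists_mem_subdiff_of_rows hconv (P := 0) (C := ∅) (by simp)).imp fun _ h => h.1

lemma subdiff_nonneg {f : (Fin n → ℝ) → (Fin m → ℝ)} (hmon : Monotone f) {v : Fin n → ℝ}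
    {P : Matrix (Fin m) (Fin n) ℝ} (hP : P ∈ Subdiff f v) (i : Fin m) (j : Fin n) :
    0 ≤ P i j := by
  classical
  have hsub := hP (v - Pi.single j 1) i
  have hmono : f (v - Pi.single j 1) i ≤ f v i :=
    hmon (sub_le_self v (Pi.single_nonneg.2 zero_le_one)) i
  simp [mulVec_neg] at hsub
  linarith

lemma subdiff_sum_row {f : (Fin n → ℝ) → (Fin n → ℝ)} (hhom : AddHomog f) {v : Fin n → ℝ}
    {P : Matrix (Fin n) (Fin n) ℝ} (hP : P ∈ Subdiff f v) (i : Fin n) :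
    ∑ j, P i j = 1 := by
  have hconst : ∀ c : ℝ, c * ∑ j, P i j ≤ c := fun c => by
    have := hP (fun k => c + v k) i
    simpa [hhom c v, mulVec, dotProduct, Finset.mul_sum, mul_comm] using this
  linarith [hconst 1, hconst (-1)]

end Subdifferential

theorem exists_nonneg_vecMul_eq_self {ι : Type*} [Fintype ι] [DecidableEq ι] [Nonempty ι]
    {P : Matrix ι ι ℝ} (hP : ∀ i j, 0 ≤ P i j) (hrow : ∀ i, ∑ j, P i j = 1) :
    ∃ m : ι → ℝ, 0 ≤ m ∧ m ≠ 0 ∧ m ᵥ* P = m := by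
  have hdet : (P - 1).det = 0 :=
    exists_mulVec_eq_zero_iff.mp ⟨1, one_ne_zero, by
      rw [sub_mulVec, one_mulVec, sub_eq_zero]; ext i; simp [mulVec, dotProduct, hrow]⟩
  obtain ⟨w, hw0, hw⟩ := exists_vecMul_eq_zero_iff.mpr hdet
  rw [vecMul_sub, vecMul_one, sub_eq_zero] at hw
  set m : ι → ℝ := fun i => |w i|
  have hsub : ∀ j, m j ≤ (m ᵥ* P) j := fun j => by
    calc m j = |(w ᵥ* P) j| := by rw [hw]
      _ ≤ ∑ i, |w i * P i j| := Finset.abs_sum_le_sum_abs _ _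
      _ = (m ᵥ* P) j := by simp [m, vecMul, dotProduct, abs_mul, abs_of_nonneg (hP _ j)]
  have hsum : ∑ j, m j = ∑ j, (m ᵥ* P) j := by
    simp only [vecMul, dotProduct]
    rw [Finset.sum_comm]
    simp [← Finset.mul_sum, hrow]
  refine ⟨m, fun i => abs_nonneg _, fun h => hw0 (funext fun i => ?_), funext fun j => ?_⟩
  · simpa [m] using congrFun h i
  · exact ((Finset.sum_eq_sum_iff_of_le fun j _ => hsub j).mp hsum j (Finset.mem_univ j)).symm

section FinalClass

variable {n : ℕ} {P Q : Matrix (Fin n) (Fin n) ℝ} {C : Set (Fin n)}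

lemma IsFinalClass.nonempty (hC : IsFinalClass P C) : C.Nonempty := by
  obtain ⟨⟨i, rfl⟩, -⟩ := hC
  exact ⟨i, .refl, .refl⟩

lemma IsFinalClass.matAccess (hC : IsFinalClass P C) {i j : Fin n} (hi : i ∈ C) (hj : j ∈ C) :
    MatAccess P i j := by
  obtain ⟨⟨k, rfl⟩, -⟩ := hC
  exact hi.2.trans hj.1

lemma IsFinalClass.eq_zero (hC : IsFinalClass P C) {i j : Fin n} (hi : i ∈ C) (hj : j ∉ C) :
    P i j = 0 :=
  not_not.mp fun h => hj (hC.2 i hi j (.single h))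

lemma pos_of_matAccess (hP : ∀ i j, 0 ≤ P i j) {m : Fin n → ℝ} (hm : 0 ≤ m)
    (hmP : m ᵥ* P = m) {a b : Fin n} (hab : MatAccess P a b) (ha : 0 < m a) : 0 < m b := by
  induction hab with
  | refl => exact ha
  | @tail b c _ hbc ih =>
    calc 0 < m b * P b c := mul_pos ih ((hP b c).lt_of_ne' hbc)
      _ ≤ (m ᵥ* P) c :=
        Finset.single_le_sum (f := fun i => m i * P i c) (fun i _ => mul_nonneg (hm i) (hP i c))
          (Finset.mem_univ b)
      _ = m c := by rw [hmP]

lemma IsFinalClass.exists_vecMul_eq_self_pos (hP : ∀ i j, 0 ≤ P i j)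
    (hrow : ∀ i, ∑ j, P i j = 1) (hC : IsFinalClass P C) :
    ∃ m : Fin n → ℝ, 0 ≤ m ∧ m ᵥ* P = m ∧ ∀ i ∈ C, 0 < m i := by
  classical
  obtain ⟨i₀, hi₀⟩ := hC.nonempty
  have : Nonempty (Fin n) := ⟨i₀⟩
  -- Redirecting the rows outside `C` into `C` forces every invariant vector to vanish off `C`.
  let P' : Matrix (Fin n) (Fin n) ℝ := fun i => if i ∈ C then P i else P i₀
  have hP' : ∀ i, i ∈ C → P' i = P i := fun i hi => if_pos hi
  obtain ⟨m, hm, hm0, hmP'⟩ := exists_nonneg_vecMul_eq_self (P := P')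
    (fun i j => by unfold P'; split_ifs <;> apply hP)
    (fun i => by unfold P'; split_ifs <;> apply hrow)
  have hmC : ∀ j ∉ C, m j = 0 := fun j hj => by
    rw [← hmP']
    simp only [vecMul, dotProduct]
    refine Finset.sum_eq_zero fun i _ => ?_
    simp only [P']
    split_ifs with hi
    · rw [hC.eq_zero hi hj, mul_zero]
    · rw [hC.eq_zero hi₀ hj, mul_zero]
  have hmP : m ᵥ* P = m := by
    ext j
    conv_rhs => rw [← hmP']
    simp only [vecMul, dotProduct]
    refine Finset.sum_congr rfl fun i _ => ?_
    by_cases hi : i ∈ C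
    · rw [hP' i hi]
    · rw [hmC i hi, zero_mul, zero_mul]
  obtain ⟨a, ha⟩ := Function.ne_iff.mp hm0
  have haC : a ∈ C := by_contra fun h => ha (hmC a h)
  exact ⟨m, hm, hmP, fun i hi =>
    pos_of_matAccess hP hm hmP (hC.matAccess haC hi) ((hm a).lt_of_ne' ha)⟩

lemma matAccess_of_rows_eq (hC : ∀ i ∈ C, ∀ j, P i j ≠ 0 → j ∈ C)
    (hPQ : ∀ i ∈ C, Q i = P i) {i j : Fin n} (hi : i ∈ C) (hij : MatAccess P i j) :
    MatAccess Q i j ∧ j ∈ C := by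
  induction hij with
  | refl => exact ⟨.refl, hi⟩
  | @tail b c _ hbc ih =>
    exact ⟨ih.1.tail (by rwa [hPQ b ih.2]), hC b ih.2 c hbc⟩

lemma IsFinalClass.of_rows_eq (hC : IsFinalClass P C) (hPQ : ∀ i ∈ C, Q i = P i) :
    IsFinalClass Q C := by
  have hPstep : ∀ i ∈ C, ∀ j, P i j ≠ 0 → j ∈ C := fun i hi j h => hC.2 i hi j (.single h)
  have hQstep : ∀ i ∈ C, ∀ j, Q i j ≠ 0 → j ∈ C := fun i hi j h =>
    hPstep i hi j (by rwa [← hPQ i hi])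
  have hQP : ∀ i ∈ C, P i = Q i := fun i hi => (hPQ i hi).symm
  obtain ⟨i₀, hi₀⟩ := hC.nonempty
  refine ⟨⟨i₀, Set.ext fun j => ⟨fun hj => ?_, fun hj => ?_⟩⟩, fun i hi j hij =>
    (matAccess_of_rows_eq hQstep hQP hi hij).2⟩
  · exact ⟨(matAccess_of_rows_eq hPstep hPQ hi₀ (hC.matAccess hi₀ hj)).1,
      (matAccess_of_rows_eq hPstep hPQ hj (hC.matAccess hj hi₀)).1⟩
  · exact (matAccess_of_rows_eq hQstep hQP hi₀ hj.1).2

end FinalClass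

section Eigenvector

variable {n : ℕ} {f : (Fin n → ℝ) → (Fin n → ℝ)} {v v' : Fin n → ℝ} {lam lam' : ℝ}
  {P : Matrix (Fin n) (Fin n) ℝ} {m : Fin n → ℝ}

lemma subdiff_gap_nonneg (hP : P ∈ Subdiff f v) (v' : Fin n → ℝ) :
    0 ≤ f v' - f v - P *ᵥ (v' - v) := fun i => by
  simpa using hP v' i

lemma dotProduct_subdiff_gap (hv : f v = fun i => lam + v i)
    (hv' : f v' = fun i => lam' + v' i) (hmP : m ᵥ* P = m) :
    m ⬝ᵥ (f v' - f v - P *ᵥ (v' - v)) = (lam' - lam) * ∑ i, m i := by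
  rw [dotProduct_sub, dotProduct_mulVec, hmP, ← dotProduct_sub, hv, hv']
  simp only [dotProduct, Finset.mul_sum]
  exact Finset.sum_congr rfl fun i _ => by simp only [Pi.sub_apply]; ring

lemma eigenvalue_le_of_subdiff (hv : f v = fun i => lam + v i)
    (hv' : f v' = fun i => lam' + v' i) (hP : P ∈ Subdiff f v) (hm : 0 ≤ m) (hm0 : m ≠ 0)
    (hmP : m ᵥ* P = m) : lam ≤ lam' := by
  have hgap := dotProduct_subdiff_gap hv hv' hmP ▸
    dotProduct_nonneg_of_nonneg hm (subdiff_gap_nonneg hP v')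
  have hsum : 0 < ∑ i, m i := by
    obtain ⟨a, ha⟩ := Function.ne_iff.mp hm0
    exact Finset.sum_pos' (fun i _ => hm i) ⟨a, Finset.mem_univ a, (hm a).lt_of_ne' ha⟩
  exact sub_nonneg.mp (nonneg_of_mul_nonneg_left hgap hsum)

lemma exists_subdiff_vecMul_eq_self [Nonempty (Fin n)] (hconv : IsConvexMap f)
    (hmon : Monotone f) (hhom : AddHomog f) (v : Fin n → ℝ) :
    ∃ P ∈ Subdiff f v, ∃ m : Fin n → ℝ, 0 ≤ m ∧ m ≠ 0 ∧ m ᵥ* P = m := by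
  obtain ⟨P, hP⟩ := subdiff_nonempty hconv v
  exact ⟨P, hP, exists_nonneg_vecMul_eq_self (subdiff_nonneg hmon hP) (subdiff_sum_row hhom hP)⟩

lemma eigenvalue_unique [Nonempty (Fin n)] (hconv : IsConvexMap f) (hmon : Monotone f)
    (hhom : AddHomog f) (hv : f v = fun i => lam + v i) (hv' : f v' = fun i => lam' + v' i) :
    lam = lam' := by
  obtain ⟨P, hP, m, hm, hm0, hmP⟩ := exists_subdiff_vecMul_eq_self hconv hmon hhom v
  obtain ⟨P', hP', m', hm', hm0', hmP'⟩ := exists_subdiff_vecMul_eq_self hconv hmon hhom v'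
  exact le_antisymm (eigenvalue_le_of_subdiff hv hv' hP hm hm0 hmP)
    (eigenvalue_le_of_subdiff hv' hv hP' hm' hm0' hmP')

lemma subdiff_row_of_vecMul_eq_self_pos (hv : f v = fun i => lam + v i)
    (hv' : f v' = fun i => lam + v' i) (hP : P ∈ Subdiff f v) (hm : 0 ≤ m)
    (hmP : m ᵥ* P = m) {i : Fin n} (hi : 0 < m i) (x : Fin n → ℝ) :
    (P *ᵥ (x - v')) i ≤ f x i - f v' i := by
  have hgap : m i * (f v' - f v - P *ᵥ (v' - v)) i = 0 := by
    have hsum := dotProduct_subdiff_gap hv hv' hmP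
    rw [sub_self, zero_mul, dotProduct, Finset.sum_eq_zero_iff_of_nonneg fun j _ =>
      mul_nonneg (hm j) (subdiff_gap_nonneg hP v' j)] at hsum
    exact hsum i (Finset.mem_univ i)
  have hgap_i := (mul_eq_zero.mp hgap).resolve_left hi.ne'
  have hsplit : P *ᵥ (x - v') = P *ᵥ (x - v) - P *ᵥ (v' - v) := by
    rw [← mulVec_sub, sub_sub_sub_cancel_right]
  simp only [Pi.sub_apply] at hgap_i
  rw [hsplit, Pi.sub_apply]
  linarith [hP x i]

theorem exists_subdiff_isFinalClass_rows_eq (hconv : IsConvexMap f) (hmon : Monotone f)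
    (hhom : AddHomog f) (hv : f v = fun i => lam + v i) (hv' : f v' = fun i => lam' + v' i)
    (hP : P ∈ Subdiff f v) {C : Set (Fin n)} (hC : IsFinalClass P C) :
    ∃ Q ∈ Subdiff f v', IsFinalClass Q C ∧ ∀ i ∈ C, Q i = P i := by
  obtain ⟨i₀, -⟩ := hC.nonempty
  have : Nonempty (Fin n) := ⟨i₀⟩
  obtain rfl := eigenvalue_unique hconv hmon hhom hv hv'
  obtain ⟨m, hm, hmP, hpos⟩ :=
    hC.exists_vecMul_eq_self_pos (subdiff_nonneg hmon hP) (subdiff_sum_row hhom hP)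
  obtain ⟨Q, hQ, hQP⟩ := exists_mem_subdiff_of_rows hconv fun i hi =>
    subdiff_row_of_vecMul_eq_self_pos hv hv' hP hm hmP (hpos i hi)
  exact ⟨Q, hQ, hC.of_rows_eq hQP, hQP⟩

theorem finalData_subdiff_le (hconv : IsConvexMap f) (hmon : Monotone f) (hhom : AddHomog f)
    (hv : f v = fun i => lam + v i) (hv' : f v' = fun i => lam' + v' i) :
    finalNodesSet (Subdiff f v) ⊆ finalNodesSet (Subdiff f v') ∧
    finalClassesSet (Subdiff f v) ⊆ finalClassesSet (Subdiff f v') ∧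
    finalGraphSet (Subdiff f v) ≤ finalGraphSet (Subdiff f v') := by
  refine ⟨?_, ?_, ?_⟩
  · rintro i ⟨P, hP, C, hC, hi⟩
    obtain ⟨Q, hQ, hQC, -⟩ := exists_subdiff_isFinalClass_rows_eq hconv hmon hhom hv hv' hP hC
    exact ⟨Q, hQ, C, hQC, hi⟩
  · rintro C ⟨P, hP, hC⟩
    obtain ⟨Q, hQ, hQC, -⟩ := exists_subdiff_isFinalClass_rows_eq hconv hmon hhom hv hv' hP hC
    exact ⟨Q, hQ, hQC⟩
  · rintro i j ⟨P, hP, C, hC, hi, hj, hij⟩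
    obtain ⟨Q, hQ, hQC, hQP⟩ := exists_subdiff_isFinalClass_rows_eq hconv hmon hhom hv hv' hP hC
    exact ⟨Q, hQ, C, hQC, hi, hj, by rwa [hQP i hi]⟩

end Eigenvector

theorem stmt3_general (n : ℕ) (f : (Fin n → ℝ) → (Fin n → ℝ))
    (hconv : IsConvexMap f) (hmon : Monotone f) (hhom : AddHomog f)
    (v v' : Fin n → ℝ) (lam lam' : ℝ)
    (hv : f v = fun i => lam + v i) (hv' : f v' = fun i => lam' + v' i) :
    finalNodesSet (Subdiff f v) = finalNodesSet (Subdiff f v') ∧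
    finalClassesSet (Subdiff f v) = finalClassesSet (Subdiff f v') ∧
    finalGraphSet (Subdiff f v) = finalGraphSet (Subdiff f v') := by
  obtain ⟨hN, hC, hG⟩ := finalData_subdiff_le hconv hmon hhom hv hv'
  obtain ⟨hN', hC', hG'⟩ := finalData_subdiff_le hconv hmon hhom hv' hv
  exact ⟨hN.antisymm hN', hC.antisymm hC', le_antisymm hG hG'⟩

/-- the critical data of a convex monotone additively homogeneous map
does not depend on the choice of the eigenvector. -/
theorem stmt3 (n : ℕ) (hn : 1 ≤ n) (f : (Fin n → ℝ) → (Fin n → ℝ))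
    (hconv : IsConvexMap f) (hmon : Monotone f) (hhom : AddHomog f)
    (v v' : Fin n → ℝ) (lam lam' : ℝ)
    (hv : f v = fun i => lam + v i) (hv' : f v' = fun i => lam' + v' i) :
    finalNodesSet (Subdiff f v) = finalNodesSet (Subdiff f v') ∧
    finalClassesSet (Subdiff f v) = finalClassesSet (Subdiff f v') ∧
    finalGraphSet (Subdiff f v) = finalGraphSet (Subdiff f v') :=
  stmt3_general n f hconv hmon hhom v v' lam lam' hv hv'
end

section
/- (Spectral projector) Let f : ℝ^n → ℝ^n be convex, monotone, additively homogeneous, with eigenvalue 0 (i.e. f has a fixed point). If z ∈ ℝ^n satisfies f(z) ≤ z, then the sequence f^k(z) converges as k → ∞; its limit f^ω(z) is a fixed point of f, and f^ω(z)_i = z_i for every critical node i ∈ N^c(f). Moreover, on the super-eigenspace E^+(f) = {x ∈ ℝ^n : f(x) ≤ x}, the map f^ω is monotone, additively homogeneous, convex, maps E^+(f) onto the fixed point set E(f) = {x : f(x) = x}, and satisfies f^ω ∘ f^ω = f^ω. -/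
open Matrix Filter

/-! If `f z ≤ z`, the iterates `f^k(z)` decrease, and they stay within sup-distance
`‖z - w‖` of the fixed point `w` since a monotone additively homogeneous map is
nonexpansive; so they converge to their infimum `f^ω(z)`, a fixed point by continuity.
Monotonicity, homogeneity and convexity of `f^ω` pass to the limit from those of `f^k`.
Critical nodes do not move: every `P ∈ ∂f(w)` is stochastic, so `P (z - w) ≤ f z - w ≤ z - w`
forces `z - w` to be constant, say `m`, on each final class `C` of `P` (its minimum over `C`
propagates along arcs), and then `f^k(z) - w ≥ P (f^{k-1}(z) - w) ≥ m = z - w` on `C`. -/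

open Set Topology

section ConvexOn

variable {𝕜 E β : Type*} [Semiring 𝕜] [PartialOrder 𝕜] [AddCommMonoid E] [SMul 𝕜 E]
  [AddCommMonoid β] [PartialOrder β] [SMul 𝕜 β] {s : Set E}

theorem ConvexOn.comp_of_monotone {g : β → β} {f : E → β} (hg : ConvexOn 𝕜 univ g)
    (hg' : Monotone g) (hf : ConvexOn 𝕜 s f) : ConvexOn 𝕜 s (g ∘ f) :=
  ⟨hf.1, fun _ hx _ hy _ _ ha hb hab =>
    (hg' (hf.2 hx hy ha hb hab)).trans (hg.2 trivial trivial ha hb hab)⟩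

theorem ConvexOn.of_tendsto {ι : Type*} {l : Filter ι} [l.NeBot] [TopologicalSpace β]
    [OrderClosedTopology β] [ContinuousAdd β] [ContinuousConstSMul 𝕜 β]
    {F : ι → E → β} {g : E → β} (hF : ∀ k, ConvexOn 𝕜 s (F k)) (hs : Convex 𝕜 s)
    (hlim : ∀ x ∈ s, Tendsto (fun k => F k x) l (𝓝 (g x))) : ConvexOn 𝕜 s g :=
  ⟨hs, fun x hx y hy a b ha hb hab =>
    le_of_tendsto_of_tendsto (hlim _ (hs hx hy ha hb hab))
      (((hlim x hx).const_smul a).add ((hlim y hy).const_smul b))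
      (Eventually.of_forall fun k => (hF k).2 hx hy ha hb hab)⟩

theorem ConvexOn.apply {ι : Type*} {γ : ι → Type*} [∀ i, AddCommMonoid (γ i)]
    [∀ i, PartialOrder (γ i)] [∀ i, SMul 𝕜 (γ i)] {f : E → ∀ i, γ i} (hf : ConvexOn 𝕜 s f)
    (i : ι) : ConvexOn 𝕜 s fun x => f x i :=
  ⟨hf.1, fun _ hx _ hy _ _ ha hb hab => hf.2 hx hy ha hb hab i⟩

theorem convexOn_pi {ι : Type*} {γ : ι → Type*} [∀ i, AddCommMonoid (γ i)]
    [∀ i, PartialOrder (γ i)] [∀ i, SMul 𝕜 (γ i)] {f : E → ∀ i, γ i} (hs : Convex 𝕜 s)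
    (hf : ∀ i, ConvexOn 𝕜 s fun x => f x i) : ConvexOn 𝕜 s f :=
  ⟨hs, fun _ hx _ hy _ _ ha hb hab i => (hf i).2 hx hy ha hb hab⟩

end ConvexOn

theorem ConvexOn.convex_setOf_le_self {𝕜 E : Type*} [Semiring 𝕜] [PartialOrder 𝕜]
    [AddCommMonoid E] [PartialOrder E] [IsOrderedAddMonoid E] [SMul 𝕜 E] [PosSMulMono 𝕜 E]
    {f : E → E} (hf : ConvexOn 𝕜 univ f) : Convex 𝕜 {x | f x ≤ x} :=
  fun _ hx _ hy _ _ ha hb hab => (hf.2 trivial trivial ha hb hab).trans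
    (add_le_add (smul_le_smul_of_nonneg_left hx ha) (smul_le_smul_of_nonneg_left hy hb))

section IterateInf

variable {α : Type*} [ConditionallyCompleteLattice α] {f : α → α} {x y : α}

/-- The limit `f^ω(x)` of the decreasing orbit of a point with `f x ≤ x`. -/
noncomputable def iterateInf (f : α → α) (x : α) : α :=
  ⨅ k, f^[k] x

theorem iterateInf_eq_self (hx : f x = x) : iterateInf f x = x := by
  simp [iterateInf, Function.iterate_fixed hx]

theorem iterateInf_mono (hf : Monotone f) (hbdd : BddBelow (range fun k => f^[k] x))
    (hxy : x ≤ y) : iterateInf f x ≤ iterateInf f y :=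
  ciInf_mono hbdd fun k => hf.iterate k hxy

variable [TopologicalSpace α] [InfConvergenceClass α]

theorem tendsto_iterate_iterateInf (hf : Monotone f) (hx : f x ≤ x)
    (hbdd : BddBelow (range fun k => f^[k] x)) :
    Tendsto (fun k => f^[k] x) atTop (𝓝 (iterateInf f x)) :=
  tendsto_atTop_ciInf (hf.antitone_iterate_of_map_le hx) hbdd

theorem map_iterateInf [T2Space α] (hf : Monotone f) (hf' : Continuous f) (hx : f x ≤ x)
    (hbdd : BddBelow (range fun k => f^[k] x)) : f (iterateInf f x) = iterateInf f x :=
  isFixedPt_of_tendsto_iterate (tendsto_iterate_iterateInf hf hx hbdd) hf'.continuousAt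

end IterateInf

namespace AddHomog

variable {n : ℕ} {f : (Fin n → ℝ) → (Fin n → ℝ)}

theorem iterate (hf : AddHomog f) (k : ℕ) : AddHomog f^[k] := by
  induction k with
  | zero => exact fun _ _ => rfl
  | succ k ih =>
    intro c x
    rw [Function.iterate_succ_apply', Function.iterate_succ_apply', ih, hf]

theorem lipschitzWith_one (hhom : AddHomog f) (hmon : Monotone f) : LipschitzWith 1 f := by
  have key : ∀ x y i, f x i - f y i ≤ dist x y := fun x y i => by
    have hxy : x ≤ fun j => dist x y + y j := fun j => by
      have := (Real.sub_le_dist (x j) (y j)).trans (dist_le_pi_dist x y j)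
      linarith
    have := hmon hxy i
    rw [hhom] at this
    linarith
  refine LipschitzWith.of_dist_le_mul fun x y => ?_
  rw [NNReal.coe_one, one_mul, dist_pi_le_iff dist_nonneg]
  exact fun i => abs_sub_le_iff.2 ⟨key x y i, dist_comm x y ▸ key y x i⟩

theorem bddBelow_range_iterate (hhom : AddHomog f) (hmon : Monotone f) {w : Fin n → ℝ}
    (hw : f w = w) (z : Fin n → ℝ) : BddBelow (range fun k => f^[k] z) := by
  refine ⟨fun i => w i - dist z w, ?_⟩
  rintro _ ⟨k, rfl⟩ i
  have hdist : dist w (f^[k] z) ≤ dist z w := by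
    simpa [Function.iterate_fixed hw, dist_comm] using
      ((hhom.lipschitzWith_one hmon).iterate k).dist_le_mul w z
  have := (Real.sub_le_dist (w i) (f^[k] z i)).trans ((dist_le_pi_dist w (f^[k] z) i).trans hdist)
  change w i - dist z w ≤ f^[k] z i
  linarith

end AddHomog

section Subdiff

variable {m n : ℕ}

theorem nonneg_of_mem_subdiff_s6 {f : (Fin n → ℝ) → (Fin m → ℝ)} {v : Fin n → ℝ}
    {P : Matrix (Fin m) (Fin n) ℝ} (hmon : Monotone f) (hP : P ∈ Subdiff f v) (a : Fin m)
    (b : Fin n) : 0 ≤ P a b := by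
  have hle := hP (v - Pi.single b 1) a
  have hfv := hmon (sub_le_self v (Pi.single_nonneg.2 zero_le_one : 0 ≤ Pi.single b (1 : ℝ))) a
  simp only [sub_sub_cancel_left, mulVec_neg, mulVec_single_one, Pi.neg_apply, col_apply] at hle
  linarith

theorem sum_row_eq_one_of_mem_subdiff {f : (Fin n → ℝ) → (Fin n → ℝ)} {v : Fin n → ℝ}
    {P : Matrix (Fin n) (Fin n) ℝ} (hhom : AddHomog f) (hP : P ∈ Subdiff f v) (a : Fin n) :
    ∑ b, P a b = 1 := by
  have key : ∀ t : ℝ, (∑ b, P a b) * t ≤ t := fun t => by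
    have := hP (fun k => t + v k) a
    rw [hhom] at this
    simpa [mulVec, dotProduct, Finset.sum_mul] using this
  linarith [key 1, key (-1)]

theorem isStochMat_of_mem_subdiff {f : (Fin n → ℝ) → (Fin n → ℝ)} {v : Fin n → ℝ}
    {P : Matrix (Fin n) (Fin n) ℝ} (hmon : Monotone f) (hhom : AddHomog f)
    (hP : P ∈ Subdiff f v) : IsStochMat P :=
  fun a => ⟨nonneg_of_mem_subdiff_s6 hmon hP a, sum_row_eq_one_of_mem_subdiff hhom hP a⟩

end Subdiff

namespace IsStochMat

variable {n : ℕ} {P : Matrix (Fin n) (Fin n) ℝ} {C : Set (Fin n)} {a : Fin n}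

theorem const_le_mulVec_of_mem_finalClass (hP : IsStochMat P) (hC : IsFinalClass P C)
    {u : Fin n → ℝ} {c : ℝ} (hu : ∀ b ∈ C, c ≤ u b) (ha : a ∈ C) : c ≤ (P *ᵥ u) a :=
  calc c = ∑ b, P a b * c := by rw [← Finset.sum_mul, (hP a).2, one_mul]
    _ ≤ ∑ b, P a b * u b := Finset.sum_le_sum fun b _ => by
        by_cases hab : P a b = 0
        · simp [hab]
        · exact mul_le_mul_of_nonneg_left (hu b (hC.2 a ha b (.single hab))) ((hP a).1 b)

theorem exists_const_on_finalClass (hP : IsStochMat P) (hC : IsFinalClass P C)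
    {v : Fin n → ℝ} (hv : ∀ a ∈ C, (P *ᵥ v) a ≤ v a) : ∃ m, ∀ a ∈ C, v a = m := by
  obtain ⟨i, hCi⟩ := hC.1
  have hmem (k : Fin n) : k ∈ C ↔ MatAccess P i k ∧ MatAccess P k i := Set.ext_iff.1 hCi k
  obtain ⟨j, hj, hmin⟩ := C.exists_min_image v C.toFinite ⟨i, (hmem i).2 ⟨.refl, .refl⟩⟩
  have hmin_closed : ∀ a ∈ C, v a = v j → ∀ b, P a b ≠ 0 → v b = v j := by
    intro a ha hva b hab
    have hterm : ∀ c ∈ Finset.univ, 0 ≤ P a c * (v c - v j) := fun c _ => by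
      by_cases hac : P a c = 0
      · simp [hac]
      · exact mul_nonneg ((hP a).1 c) (sub_nonneg.2 (hmin c (hC.2 a ha c (.single hac))))
    have hsum : ∑ c, P a c * (v c - v j) = 0 := by
      refine le_antisymm ?_ (Finset.sum_nonneg hterm)
      have := hv a ha
      simp only [mul_sub, Finset.sum_sub_distrib, ← Finset.sum_mul, (hP a).2, one_mul]
      exact sub_nonpos.2 (hva ▸ this)
    have := (Finset.sum_eq_zero_iff_of_nonneg hterm).1 hsum b (Finset.mem_univ b)
    exact sub_eq_zero.1 ((mul_eq_zero.1 this).resolve_left hab)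
  refine ⟨v j, fun a ha => ?_⟩
  have hja : MatAccess P j a := ((hmem j).1 hj).2.trans ((hmem a).1 ha).1
  induction hja with
  | refl => rfl
  | tail hjb hbc ih => exact hmin_closed _ (hC.2 j hj _ hjb) (ih (hC.2 j hj _ hjb)) _ hbc

end IsStochMat

section SpectralProjector

variable {n : ℕ} {f : (Fin n → ℝ) → (Fin n → ℝ)} {w z : Fin n → ℝ}

theorem le_iterate_of_mem_finalClass {P : Matrix (Fin n) (Fin n) ℝ} {C : Set (Fin n)}
    (hmon : Monotone f) (hhom : AddHomog f) (hw : f w = w) (hP : P ∈ Subdiff f w)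
    (hC : IsFinalClass P C) (hz : f z ≤ z) (k : ℕ) : ∀ j ∈ C, z j ≤ f^[k] z j := by
  have hS := isStochMat_of_mem_subdiff hmon hhom hP
  have hsub : ∀ x j, (P *ᵥ (x - w)) j ≤ f x j - w j := fun x j => by
    simpa only [hw] using hP x j
  obtain ⟨m, hm⟩ := hS.exists_const_on_finalClass hC (v := z - w) fun a _ =>
    (hsub z a).trans (by simpa using hz a)
  induction k with
  | zero => exact fun _ _ => le_rfl
  | succ k ih =>
    intro j hj
    have hle : m ≤ (P *ᵥ (f^[k] z - w)) j :=
      hS.const_le_mulVec_of_mem_finalClass hC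
        (fun b hb => hm b hb ▸ sub_le_sub_right (ih b hb) (w b)) hj
    have hzj : z j - w j = m := hm j hj
    have := hsub (f^[k] z) j
    rw [Function.iterate_succ_apply']
    linarith

theorem iterateInf_addHomog (hmon : Monotone f) (hhom : AddHomog f) (hw : f w = w)
    (hz : f z ≤ z) (c : ℝ) : iterateInf f (fun i => c + z i) = fun i => c + iterateInf f z i := by
  have hz' : f (fun i => c + z i) ≤ fun i => c + z i := by
    rw [hhom]; exact fun i => add_le_add_right (hz i) c
  refine tendsto_nhds_unique
    (tendsto_iterate_iterateInf hmon hz' (hhom.bddBelow_range_iterate hmon hw _)) ?_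
  rw [show (fun k => f^[k] fun i => c + z i) = fun k i => c + f^[k] z i from
    funext fun k => hhom.iterate k c z]
  exact (tendsto_iterate_iterateInf hmon hz (hhom.bddBelow_range_iterate hmon hw z)).const_add
    (fun _ => c)

theorem IsConvexMap.convexOn_iterate (hconv : IsConvexMap f) (hmon : Monotone f) (k : ℕ) :
    ConvexOn ℝ univ f^[k] := by
  induction k with
  | zero => exact convexOn_id convex_univ
  | succ k ih =>
    rw [Function.iterate_succ']
    exact ConvexOn.comp_of_monotone (convexOn_pi convex_univ hconv) hmon ih

theorem convexOn_iterateInf (hconv : IsConvexMap f) (hmon : Monotone f) (hhom : AddHomog f)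
    (hw : f w = w) : ConvexOn ℝ {x | f x ≤ x} (iterateInf f) := by
  have hE := (convexOn_pi convex_univ hconv).convex_setOf_le_self
  exact ConvexOn.of_tendsto (fun k => (hconv.convexOn_iterate hmon k).subset (subset_univ _) hE)
    hE fun x hx => tendsto_iterate_iterateInf hmon hx (hhom.bddBelow_range_iterate hmon hw x)

theorem iterateInf_apply_eq_self_of_mem_finalNodesSet (hmon : Monotone f) (hhom : AddHomog f)
    (hw : f w = w) (hz : f z ≤ z) {i : Fin n} (hi : i ∈ finalNodesSet (Subdiff f w)) :
    iterateInf f z i = z i := by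
  obtain ⟨P, hP, C, hC, hiC⟩ := hi
  have hbdd := hhom.bddBelow_range_iterate hmon hw z
  exact le_antisymm (ciInf_le hbdd 0 i) <| ge_of_tendsto'
    (tendsto_pi_nhds.1 (tendsto_iterate_iterateInf hmon hz hbdd) i)
    fun k => le_iterate_of_mem_finalClass hmon hhom hw hP hC hz k i hiC

end SpectralProjector

theorem stmt6_general (n : ℕ) (f : (Fin n → ℝ) → (Fin n → ℝ))
    (hconv : IsConvexMap f) (hmon : Monotone f) (hhom : AddHomog f)
    (w : Fin n → ℝ) (hw : f w = w) :
    ∃ fω : (Fin n → ℝ) → (Fin n → ℝ),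
      (∀ z, f z ≤ z → Filter.Tendsto (fun k => f^[k] z) Filter.atTop (nhds (fω z))) ∧
      (∀ z, f z ≤ z → f (fω z) = fω z) ∧
      (∀ z, f z ≤ z → ∀ i ∈ finalNodesSet (Subdiff f w), fω z i = z i) ∧
      (∀ x y, f x ≤ x → f y ≤ y → x ≤ y → fω x ≤ fω y) ∧
      (∀ (c : ℝ) (z : Fin n → ℝ), f z ≤ z → fω (fun i => c + z i) = fun i => c + fω z i) ∧
      (∀ i, ConvexOn ℝ {x : Fin n → ℝ | f x ≤ x} (fun x => fω x i)) ∧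
      fω '' {x : Fin n → ℝ | f x ≤ x} = {x : Fin n → ℝ | f x = x} ∧
      (∀ z, f z ≤ z → fω (fω z) = fω z) := by
  have hbdd := hhom.bddBelow_range_iterate hmon hw
  have hfix : ∀ z, f z ≤ z → f (iterateInf f z) = iterateInf f z := fun z hz =>
    map_iterateInf hmon (hhom.lipschitzWith_one hmon).continuous hz (hbdd z)
  refine ⟨iterateInf f, fun z hz => tendsto_iterate_iterateInf hmon hz (hbdd z), hfix,
    fun z hz i => iterateInf_apply_eq_self_of_mem_finalNodesSet hmon hhom hw hz,
    fun x y _ _ hxy => iterateInf_mono hmon (hbdd x) hxy,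
    fun c z hz => iterateInf_addHomog hmon hhom hw hz c,
    (convexOn_iterateInf hconv hmon hhom hw).apply, ?_,
    fun z hz => iterateInf_eq_self (hfix z hz)⟩
  ext x
  exact ⟨fun ⟨z, hz, hzx⟩ => hzx ▸ hfix z hz, fun hx => ⟨x, hx.le, iterateInf_eq_self hx⟩⟩

/-- Spectral projector: for a convex monotone additively homogeneous map
with a fixed point, iterates of any super-fixed point converge to a fixed point which
agrees with it on the critical nodes, and the limit map `f^ω` is a monotone,
additively homogeneous, convex, idempotent projector from `E⁺(f)` onto `E(f)`. -/
theorem stmt6 (n : ℕ) (hn : 1 ≤ n) (f : (Fin n → ℝ) → (Fin n → ℝ))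
    (hconv : IsConvexMap f) (hmon : Monotone f) (hhom : AddHomog f)
    (w : Fin n → ℝ) (hw : f w = w) :
    ∃ fω : (Fin n → ℝ) → (Fin n → ℝ),
      (∀ z, f z ≤ z → Filter.Tendsto (fun k => f^[k] z) Filter.atTop (nhds (fω z))) ∧
      (∀ z, f z ≤ z → f (fω z) = fω z) ∧
      (∀ z, f z ≤ z → ∀ i ∈ finalNodesSet (Subdiff f w), fω z i = z i) ∧
      (∀ x y, f x ≤ x → f y ≤ y → x ≤ y → fω x ≤ fω y) ∧
      (∀ (c : ℝ) (z : Fin n → ℝ), f z ≤ z → fω (fun i => c + z i) = fun i => c + fω z i) ∧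
      (∀ i, ConvexOn ℝ {x : Fin n → ℝ | f x ≤ x} (fun x => fω x i)) ∧
      fω '' {x : Fin n → ℝ | f x ≤ x} = {x : Fin n → ℝ | f x = x} ∧
      (∀ z, f z ≤ z → fω (fω z) = fω z) :=
  stmt6_general n f hconv hmon hhom w hw
end

section
/- Let f : ℝ^n → ℝ^n be monotone and nonexpansive with respect to some norm on ℝ^n, and suppose f has a fixed point. Then for any fixed points x, y of f, the limits x ∨_f y = lim_{k→∞} f^k(x ∨ y) and x ∧_f y = lim_{k→∞} f^k(x ∧ y) exist (where ∨ and ∧ denote componentwise maximum and minimum); both limits are fixed points of f; x ∧_f y is the greatest fixed point z with z ≤ x and z ≤ y, and x ∨_f y is the least fixed point z with z ≥ x and z ≥ y. In particular the fixed point set of f, equipped with the componentwise order, is a lattice. -/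
open Matrix Filter

/-!
Since `x` and `y` are fixed, monotonicity makes the orbit `f^k (x ⊔ y)` increasing, and
nonexpansiveness keeps it in an `N`-ball around the fixed point `x`. All norms on `ℝⁿ` being
equivalent, the orbit is bounded, hence converges to its supremum `a`; `a` is fixed because `f`
is Lipschitz, and any fixed point `z ≥ x, y` bounds the orbit, as `f^k (x ⊔ y) ≤ f^k z = z`.
The meet is the same argument in the order dual.
-/

open Set Filter Topology Function

section FixedPoints

variable {α : Type*} [ConditionallyCompleteLattice α] [TopologicalSpace α] [T2Space α]
  {f : α → α} {u : α}

theorem Monotone.exists_tendsto_iterate_isLeast [SupConvergenceClass α] (hf : Monotone f)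
    (hc : Continuous f) (hu : u ≤ f u) (hb : BddAbove (range fun k => f^[k] u)) :
    ∃ a, Tendsto (fun k => f^[k] u) atTop (𝓝 a) ∧ IsLeast (fixedPoints f ∩ Ici u) a := by
  have hlim := tendsto_atTop_ciSup (hf.monotone_iterate_of_le_map hu) hb
  refine ⟨_, hlim, ⟨?_, le_ciSup hb 0⟩, fun z ⟨hz, huz⟩ => ciSup_le fun k => ?_⟩
  · have hsucc := (tendsto_add_atTop_iff_nat 1).2 hlim
    simp only [iterate_succ_apply'] at hsucc
    exact tendsto_nhds_unique ((hc.tendsto _).comp hlim) hsucc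
  · exact (hf.iterate k huz).trans_eq (iterate_fixed hz k)

theorem Monotone.exists_tendsto_iterate_isGreatest [InfConvergenceClass α] (hf : Monotone f)
    (hc : Continuous f) (hu : f u ≤ u) (hb : BddBelow (range fun k => f^[k] u)) :
    ∃ b, Tendsto (fun k => f^[k] u) atTop (𝓝 b) ∧ IsGreatest (fixedPoints f ∩ Iic u) b := by
  have : T2Space αᵒᵈ := inferInstanceAs (T2Space α)
  exact hf.dual.exists_tendsto_iterate_isLeast (α := αᵒᵈ) hc hu hb

end FixedPoints

namespace Seminorm

variable {E : Type*} [NormedAddCommGroup E] [NormedSpace ℝ E] [FiniteDimensional ℝ E]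
  (N : Seminorm ℝ E)

theorem continuous_of_finiteDimensional : Continuous N :=
  continuousOn_univ.1 (N.convexOn.continuousOn isOpen_univ)

theorem exists_pos_le_mul_norm : ∃ C, 0 < C ∧ ∀ v, N v ≤ C * ‖v‖ :=
  N.bound_of_continuous_normedSpace N.continuous_of_finiteDimensional

theorem exists_pos_norm_le_mul (hN : ∀ v, N v = 0 → v = 0) : ∃ C, 0 < C ∧ ∀ v, ‖v‖ ≤ C * N v := by
  obtain ⟨M, hM⟩ := (isCompact_sphere (0 : E) 1).exists_bound_of_continuousOn
    (N.continuous_of_finiteDimensional.continuousOn.inv₀ fun v hv h => by simp [hN v h] at hv)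
  refine ⟨max M 1, by positivity, fun v => ?_⟩
  rcases eq_or_ne v 0 with rfl | hv
  · simp
  have hv' : 0 < ‖v‖ := norm_pos_iff.2 hv
  have hNv : 0 < N v := (apply_nonneg N v).lt_of_ne' fun h => hv (hN v h)
  have hw : ‖v‖⁻¹ • v ∈ Metric.sphere (0 : E) 1 := by simp [norm_smul, hv'.ne']
  have hNw : N (‖v‖⁻¹ • v) = ‖v‖⁻¹ * N v := by rw [map_smul_eq_mul, norm_inv, norm_norm]
  have := hM _ hw
  rw [Pi.inv_apply, hNw, mul_inv, inv_inv, norm_mul, norm_norm, norm_inv,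
    Real.norm_of_nonneg hNv.le, ← div_eq_mul_inv, div_le_iff₀ hNv] at this
  exact this.trans (by gcongr; exact le_max_left _ _)

variable {N} {f : E → E}

theorem lipschitzWith_of_nonexpansive (hN : ∀ v, N v = 0 → v = 0)
    (hf : ∀ x y, N (f x - f y) ≤ N (x - y)) : ∃ K, LipschitzWith K f := by
  obtain ⟨C, hC, hle⟩ := N.exists_pos_le_mul_norm
  obtain ⟨C', hC', hge⟩ := N.exists_pos_norm_le_mul hN
  refine ⟨⟨C' * C, by positivity⟩, LipschitzWith.of_dist_le_mul fun x y => ?_⟩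
  simp only [dist_eq_norm]
  calc ‖f x - f y‖ ≤ C' * N (f x - f y) := hge _
    _ ≤ C' * (C * ‖x - y‖) := by gcongr; exact (hf x y).trans (hle _)
    _ = C' * C * ‖x - y‖ := by ring

theorem isBounded_range_iterate (hN : ∀ v, N v = 0 → v = 0)
    (hf : ∀ x y, N (f x - f y) ≤ N (x - y)) {x : E} (hx : f x = x) (u : E) :
    Bornology.IsBounded (range fun k => f^[k] u) := by
  obtain ⟨C, hC, hge⟩ := N.exists_pos_norm_le_mul hN
  have horbit : ∀ k, N (f^[k] u - x) ≤ N (u - x) := by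
    intro k
    induction k with
    | zero => simp
    | succ k ih =>
      calc N (f^[k + 1] u - x) = N (f (f^[k] u) - f x) := by rw [iterate_succ_apply', hx]
        _ ≤ N (u - x) := (hf _ _).trans ih
  refine (Metric.isBounded_iff_subset_closedBall x).2 ⟨C * N (u - x), ?_⟩
  rintro _ ⟨k, rfl⟩
  rw [Metric.mem_closedBall, dist_eq_norm]
  exact (hge _).trans (by gcongr; exact horbit k)

end Seminorm

theorem stmt8_general (n : ℕ) (f : (Fin n → ℝ) → (Fin n → ℝ))
    (hmon : Monotone f)
    (hne : ∃ N : Seminorm ℝ (Fin n → ℝ), (∀ x, N x = 0 → x = 0) ∧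
      ∀ x y, N (f x - f y) ≤ N (x - y))
    (x y : Fin n → ℝ) (hx : f x = x) (hy : f y = y) :
    (∃ a, Filter.Tendsto (fun k => f^[k] (x ⊔ y)) Filter.atTop (nhds a) ∧
      f a = a ∧ x ≤ a ∧ y ≤ a ∧ ∀ z, f z = z → x ≤ z → y ≤ z → a ≤ z) ∧
    (∃ b, Filter.Tendsto (fun k => f^[k] (x ⊓ y)) Filter.atTop (nhds b) ∧
      f b = b ∧ b ≤ x ∧ b ≤ y ∧ ∀ z, f z = z → z ≤ x → z ≤ y → z ≤ b) := by
  obtain ⟨N, hN, hNf⟩ := hne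
  obtain ⟨K, hK⟩ := N.lipschitzWith_of_nonexpansive hN hNf
  have hbdd u := N.isBounded_range_iterate hN hNf hx u
  obtain ⟨a, ha, ⟨hfa, hxya⟩, hleast⟩ := hmon.exists_tendsto_iterate_isLeast hK.continuous
    (sup_le (hx.ge.trans (hmon le_sup_left)) (hy.ge.trans (hmon le_sup_right))) (hbdd _).bddAbove
  obtain ⟨b, hb, ⟨hfb, hbxy⟩, hgreatest⟩ := hmon.exists_tendsto_iterate_isGreatest hK.continuous
    (le_inf ((hmon inf_le_left).trans hx.le) ((hmon inf_le_right).trans hy.le)) (hbdd _).bddBelow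
  exact ⟨⟨a, ha, hfa, le_sup_left.trans hxya, le_sup_right.trans hxya,
      fun z hz hxz hyz => hleast ⟨hz, sup_le hxz hyz⟩⟩,
    ⟨b, hb, hfb, hbxy.trans inf_le_left, hbxy.trans inf_le_right,
      fun z hz hzx hzy => hgreatest ⟨hz, le_inf hzx hzy⟩⟩⟩

/-- the fixed point set of a monotone map, nonexpansive for some norm,
is a lattice: `f^k(x ⊔ y)` and `f^k(x ⊓ y)` converge to the least upper bound and
the greatest lower bound of the fixed points `x, y` in the fixed point set. -/
theorem stmt8 (n : ℕ) (hn : 1 ≤ n) (f : (Fin n → ℝ) → (Fin n → ℝ))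
    (hmon : Monotone f)
    (hne : ∃ N : Seminorm ℝ (Fin n → ℝ), (∀ x, N x = 0 → x = 0) ∧
      ∀ x y, N (f x - f y) ≤ N (x - y))
    (hfix : ∃ w, f w = w)
    (x y : Fin n → ℝ) (hx : f x = x) (hy : f y = y) :
    (∃ a, Filter.Tendsto (fun k => f^[k] (x ⊔ y)) Filter.atTop (nhds a) ∧
      f a = a ∧ x ≤ a ∧ y ≤ a ∧ ∀ z, f z = z → x ≤ z → y ≤ z → a ≤ z) ∧
    (∃ b, Filter.Tendsto (fun k => f^[k] (x ⊓ y)) Filter.atTop (nhds b) ∧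
      f b = b ∧ b ≤ x ∧ b ≤ y ∧ ∀ z, f z = z → z ≤ x → z ≤ y → z ≤ b) :=
  stmt8_general n f hmon hne x y hx hy
end

section
/- Let P be an n×n stochastic matrix and k ≥ 1. Then the final graph of P^k equals the k-th power of the final graph of P: G^f(P^k) = (G^f(P))^k. In particular, the union of final classes satisfies N^f(P^k) = N^f(P). -/
open Matrix Filter

/-!
For nonnegative `P`, `(P ^ m) i j ≠ 0` iff the graph of `P` has a path of length `m` from `i`
to `j`, so access in `P ^ k` is access in `P` along paths whose length is a multiple of `k`.
A node is final iff every node it reaches reaches it back. If `i` is final for `P` and reaches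
`j` along a path of length `m k`, take a return path `j → i` of length `s`; going `k - 1` more
times around the circuit `j → i → j` first gives a return path of length `(s + (k - 1) m) k`.
Conversely, no row of a stochastic matrix vanishes, so every path `i → j` of length `b` extends
to a path `i → j → w` of length `b k`; if `i` is final for `P ^ k`, then `w`, and hence `j`,
reaches `i` back. Finally, final nodes are closed under arcs, so the arcs of `G^f(P)` are the
arcs of `P` leaving final nodes, and a path of `G^f(P)` is a path of `P` from a final node.
-/

section GraphPow

variable {n : ℕ} {r : Fin n → Fin n → Prop} {i j : Fin n}

theorem graphPow_zero : GraphPow r 0 i j ↔ i = j := by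
  constructor
  · rintro ⟨c, rfl, rfl, -⟩
    rfl
  · rintro rfl
    exact ⟨fun _ => i, rfl, rfl, fun t ht => absurd ht t.not_lt_zero⟩

theorem graphPow_succ' {k : ℕ} : GraphPow r (k + 1) i j ↔ ∃ l, r i l ∧ GraphPow r k l j := by
  constructor
  · rintro ⟨c, rfl, rfl, hc⟩
    exact ⟨c 1, hc 0 k.succ_pos, fun t => c (t + 1), rfl, rfl, fun t ht => hc (t + 1) (by omega)⟩
  · rintro ⟨l, hil, c, rfl, rfl, hc⟩
    refine ⟨fun t => if t = 0 then i else c (t - 1), rfl, rfl, ?_⟩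
    rintro (_ | t) ht
    · exact hil
    · exact hc t (by omega)

theorem graphPow_one : GraphPow r 1 i j ↔ r i j := by
  simp [graphPow_succ', graphPow_zero]

theorem graphPow_add {a b : ℕ} :
    GraphPow r (a + b) i j ↔ ∃ l, GraphPow r a i l ∧ GraphPow r b l j := by
  induction a generalizing i with
  | zero => simp [graphPow_zero]
  | succ a ih =>
    rw [Nat.add_right_comm, graphPow_succ']
    simp only [ih, graphPow_succ']
    exact ⟨fun ⟨l, hil, m, hlm, hmj⟩ => ⟨m, ⟨l, hil, hlm⟩, hmj⟩,
      fun ⟨m, ⟨l, hil, hlm⟩, hmj⟩ => ⟨l, hil, m, hlm, hmj⟩⟩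

theorem graphPow_mul_of_self {a : ℕ} (h : GraphPow r a i i) (m : ℕ) :
    GraphPow r (m * a) i i := by
  induction m with
  | zero => simp [graphPow_zero]
  | succ m ih => exact Nat.succ_mul m a ▸ graphPow_add.2 ⟨i, ih, h⟩

theorem reflTransGen_graphPow_iff {k : ℕ} :
    Relation.ReflTransGen (GraphPow r k) i j ↔ ∃ m, GraphPow r (m * k) i j := by
  constructor
  · intro h
    induction h with
    | refl => exact ⟨0, by simp [graphPow_zero]⟩
    | tail _ hlj ih =>
      obtain ⟨m, hm⟩ := ih
      exact ⟨m + 1, Nat.succ_mul m k ▸ graphPow_add.2 ⟨_, hm, hlj⟩⟩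
  · rintro ⟨m, hm⟩
    induction m generalizing j with
    | zero =>
      rw [zero_mul, graphPow_zero] at hm
      exact hm ▸ .refl
    | succ m ih =>
      obtain ⟨l, hil, hlj⟩ := graphPow_add.1 (Nat.succ_mul m k ▸ hm)
      exact (ih hil).tail hlj

theorem reflTransGen_iff_exists_graphPow :
    Relation.ReflTransGen r i j ↔ ∃ m, GraphPow r m i j := by
  have hr : GraphPow r 1 = r := by
    ext a b
    exact graphPow_one
  simpa [hr] using reflTransGen_graphPow_iff (r := r) (k := 1) (i := i) (j := j)

theorem exists_graphPow_of_forall_exists (h : ∀ a, ∃ b, r a b) (m : ℕ) (i : Fin n) :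
    ∃ j, GraphPow r m i j := by
  induction m generalizing i with
  | zero => exact ⟨i, graphPow_zero.2 rfl⟩
  | succ m ih =>
    obtain ⟨l, hil⟩ := h i
    obtain ⟨j, hlj⟩ := ih l
    exact ⟨j, graphPow_succ'.2 ⟨l, hil, hlj⟩⟩

theorem graphPow_restrict_iff_of_mem {F : Set (Fin n)} (hF : ∀ a b, a ∈ F → r a b → b ∈ F)
    {k : ℕ} (hi : i ∈ F) :
    GraphPow (fun a b => a ∈ F ∧ r a b) k i j ↔ GraphPow r k i j := by
  induction k generalizing i with
  | zero => simp only [graphPow_zero]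
  | succ k ih =>
    simp only [graphPow_succ']
    exact exists_congr fun l =>
      ⟨fun ⟨⟨_, hil⟩, hlj⟩ => ⟨hil, (ih (hF i l hi hil)).1 hlj⟩,
        fun ⟨hil, hlj⟩ => ⟨⟨hi, hil⟩, (ih (hF i l hi hil)).2 hlj⟩⟩

theorem graphPow_restrict_iff {F : Set (Fin n)} (hF : ∀ a b, a ∈ F → r a b → b ∈ F)
    {k : ℕ} (hk : 0 < k) :
    GraphPow (fun a b => a ∈ F ∧ r a b) k i j ↔ i ∈ F ∧ GraphPow r k i j := by
  obtain ⟨k, rfl⟩ := Nat.exists_eq_add_one_of_ne_zero hk.ne'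
  constructor
  · intro h
    obtain ⟨-, ⟨hi, -⟩, -⟩ := graphPow_succ'.1 h
    exact ⟨hi, (graphPow_restrict_iff_of_mem hF hi).1 h⟩
  · rintro ⟨hi, h⟩
    exact (graphPow_restrict_iff_of_mem hF hi).2 h

end GraphPow

section FinalClasses

variable {n : ℕ} {P : Matrix (Fin n) (Fin n) ℝ} {i j : Fin n}

theorem mem_finalNodes_iff : i ∈ finalNodes P ↔ ∀ j, MatAccess P i j → MatAccess P j i := by
  constructor
  · rintro ⟨C, ⟨⟨i₀, rfl⟩, hfinal⟩, hi⟩ j hij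
    exact (hfinal i hi j hij).2.trans hi.1
  · intro h
    refine ⟨{j | MatAccess P i j ∧ MatAccess P j i}, ⟨⟨i, rfl⟩, ?_⟩, .refl, .refl⟩
    rintro j ⟨hij, -⟩ l hjl
    exact ⟨hij.trans hjl, h l (hij.trans hjl)⟩

theorem mem_finalNodes_of_matAccess (hi : i ∈ finalNodes P) (hij : MatAccess P i j) :
    j ∈ finalNodes P := by
  rw [mem_finalNodes_iff] at hi ⊢
  exact fun l hjl => (hi l (hij.trans hjl)).trans hij

theorem finalGraph_iff : finalGraph P i j ↔ i ∈ finalNodes P ∧ P i j ≠ 0 := by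
  constructor
  · rintro ⟨C, hC, hi, -, hij⟩
    exact ⟨⟨C, hC, hi⟩, hij⟩
  · rintro ⟨⟨C, hC, hi⟩, hij⟩
    exact ⟨C, hC, hi, hC.2 i hi j (.single hij), hij⟩

end FinalClasses

section MatrixPow

variable {n : ℕ} {P : Matrix (Fin n) (Fin n) ℝ}

theorem pow_apply_ne_zero_iff (hP : ∀ i j, 0 ≤ P i j) (m : ℕ) (i j : Fin n) :
    (P ^ m) i j ≠ 0 ↔ GraphPow (fun a b => P a b ≠ 0) m i j := by
  induction m generalizing i with
  | zero => simp [Matrix.one_apply, graphPow_zero]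
  | succ m ih =>
    rw [pow_succ', Matrix.mul_apply, graphPow_succ', Ne,
      Finset.sum_eq_zero_iff_of_nonneg fun l _ => mul_nonneg (hP i l) (pow_apply_nonneg hP m l j)]
    simp [ih]

theorem matAccess_pow_iff (hP : ∀ i j, 0 ≤ P i j) {k : ℕ} {i j : Fin n} :
    MatAccess (P ^ k) i j ↔ ∃ m, GraphPow (fun a b => P a b ≠ 0) (m * k) i j := by
  unfold MatAccess
  simp_rw [pow_apply_ne_zero_iff hP]
  exact reflTransGen_graphPow_iff

theorem MatAccess.of_pow (hP : ∀ i j, 0 ≤ P i j) {k : ℕ} {i j : Fin n}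
    (h : MatAccess (P ^ k) i j) : MatAccess P i j := by
  obtain ⟨m, hm⟩ := (matAccess_pow_iff hP).1 h
  exact reflTransGen_iff_exists_graphPow.2 ⟨_, hm⟩

end MatrixPow

theorem IsStochMat.nonneg {n : ℕ} {P : Matrix (Fin n) (Fin n) ℝ} (hP : IsStochMat P) :
    ∀ i j, 0 ≤ P i j :=
  fun i => (hP i).1

theorem IsStochMat.exists_ne_zero {n : ℕ} {P : Matrix (Fin n) (Fin n) ℝ} (hP : IsStochMat P)
    (i : Fin n) : ∃ j, P i j ≠ 0 := by
  obtain ⟨j, -, hj⟩ := Finset.exists_ne_zero_of_sum_ne_zero ((hP i).2 ▸ one_ne_zero)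
  exact ⟨j, hj⟩

section PowFinal

variable {n : ℕ} {P : Matrix (Fin n) (Fin n) ℝ} {k : ℕ}

theorem finalNodes_subset_finalNodes_pow (hP : ∀ i j, 0 ≤ P i j) (hk : 0 < k) :
    finalNodes P ⊆ finalNodes (P ^ k) := by
  intro i hi
  rw [mem_finalNodes_iff] at hi ⊢
  intro j hij
  obtain ⟨m, hm⟩ := (matAccess_pow_iff hP).1 hij
  obtain ⟨s, hs⟩ := reflTransGen_iff_exists_graphPow.1 (hi j (MatAccess.of_pow hP hij))
  have hcircuit : GraphPow _ (s + m * k) j j := graphPow_add.2 ⟨i, hs, hm⟩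
  obtain ⟨k, rfl⟩ := Nat.exists_eq_add_one_of_ne_zero hk.ne'
  have hji := graphPow_add.2 ⟨j, graphPow_mul_of_self hcircuit k, hs⟩
  refine (matAccess_pow_iff hP).2 ⟨s + k * m, ?_⟩
  convert hji using 2
  ring

theorem finalNodes_pow_subset (hP : IsStochMat P) (hk : 0 < k) :
    finalNodes (P ^ k) ⊆ finalNodes P := by
  intro i hi
  rw [mem_finalNodes_iff] at hi ⊢
  intro j hij
  obtain ⟨b, hb⟩ := reflTransGen_iff_exists_graphPow.1 hij
  obtain ⟨k, rfl⟩ := Nat.exists_eq_add_one_of_ne_zero hk.ne'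
  obtain ⟨w, hw⟩ := exists_graphPow_of_forall_exists hP.exists_ne_zero (b * k) j
  have hiw : MatAccess (P ^ (k + 1)) i w := by
    refine (matAccess_pow_iff hP.nonneg).2 ⟨b, ?_⟩
    rw [mul_add_one, add_comm]
    exact graphPow_add.2 ⟨j, hb, hw⟩
  exact (reflTransGen_iff_exists_graphPow.2 ⟨_, hw⟩).trans (MatAccess.of_pow hP.nonneg (hi w hiw))

theorem finalNodes_pow (hP : IsStochMat P) (hk : 0 < k) : finalNodes (P ^ k) = finalNodes P :=
  (finalNodes_pow_subset hP hk).antisymm (finalNodes_subset_finalNodes_pow hP.nonneg hk)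

theorem finalGraph_pow_iff (hP : IsStochMat P) (hk : 0 < k) (i j : Fin n) :
    finalGraph (P ^ k) i j ↔ GraphPow (finalGraph P) k i j := by
  have hfinalGraph : finalGraph P = fun a b => a ∈ finalNodes P ∧ P a b ≠ 0 := by
    ext a b
    exact finalGraph_iff
  rw [finalGraph_iff, finalNodes_pow hP hk, pow_apply_ne_zero_iff hP.nonneg, hfinalGraph,
    graphPow_restrict_iff (fun _ _ ha hab => mem_finalNodes_of_matAccess ha (.single hab)) hk]

end PowFinal

theorem stmt9_general (n : ℕ) (P : Matrix (Fin n) (Fin n) ℝ)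
    (hP : IsStochMat P) (k : ℕ) (hk : 1 ≤ k) :
    (∀ i j, finalGraph (P ^ k) i j ↔ GraphPow (finalGraph P) k i j) ∧
    finalNodes (P ^ k) = finalNodes P :=
  ⟨finalGraph_pow_iff hP hk, finalNodes_pow hP hk⟩

/-- for a stochastic matrix `P` and `k ≥ 1`, the final graph of `P^k`
is the `k`-th power of the final graph of `P`; in particular the union of the final
classes of `P^k` equals that of `P`. -/
theorem stmt9 (n : ℕ) (hn : 1 ≤ n) (P : Matrix (Fin n) (Fin n) ℝ)
    (hP : IsStochMat P) (k : ℕ) (hk : 1 ≤ k) :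
    (∀ i j, finalGraph (P ^ k) i j ↔ GraphPow (finalGraph P) k i j) ∧
    finalNodes (P ^ k) = finalNodes P :=
  stmt9_general n P hP k hk
end
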